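/- Fix a > 0. Define g(z) := π^{−1/2} e^{−z²}, errfn(z) := ∫_{−∞}^{z} g(w) dw, and for t > 0, y ∈ ℝ, e(y, t) := errfn((y + a t)/√(4(t+1))) − errfn((y − a t)/√(4(t+1))). Then for each p ∈ [1, ∞] there is a constant C > 0 such that for all t > 0, the L^p norm in y over ℝ of the mixed derivative ∂_t ∂_y e(·, t) satisfies ‖∂_t ∂_y e(·, t)‖_{L^p(ℝ)} ≤ C t^{−(1/2)(1 − 1/p) − 1/2}. -/

import Mathlib

/-!
Differentiating in `y` turns `e(·, t)` into a difference of two Gaussians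
`g((y ± a t)/w)/w` of width `w = √(4(t+1))`. Differentiating once more in `t` multiplies each
by `w⁻²` and a quadratic polynomial in `z = (y ± a t)/w`, which `e^{-z²/2}` absorbs; so the
mixed derivative is bounded by `C w⁻²` times two Gaussians of width `w`, each of `Lᵖ` norm
`O(w^{1/p})`. Since `w ≥ √t` and `1/p - 2 < 0`, `w^{1/p-2} ≤ t^{(1/p-2)/2}`.
-/

open MeasureTheory Real

lemma one_div_toReal_le_one {p : ENNReal} (hp : 1 ≤ p) : 1 / p.toReal ≤ 1 := by
  rcases eq_or_ne p ⊤ with rfl | hp_top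
  · simp
  · exact div_le_one_of_le₀ (by simpa using ENNReal.toReal_mono hp_top hp) (by positivity)

lemma eLpNorm_le_lintegral_rpow_of_enorm_le_one {α E : Type*} [MeasurableSpace α]
    [NormedAddCommGroup E] {μ : Measure α} {f : α → E} (hf : ∀ x, ‖f x‖ₑ ≤ 1)
    {p : ENNReal} (hp : 1 ≤ p) :
    eLpNorm f p μ ≤ (∫⁻ x, ‖f x‖ₑ ∂μ) ^ (1 / p.toReal) := by
  rcases eq_or_ne p ⊤ with rfl | hp_top
  · simpa using eLpNormEssSup_le_of_ae_enorm_bound (Filter.Eventually.of_forall fun x => hf x)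
  have hp1 : 1 ≤ p.toReal := by simpa using ENNReal.toReal_mono hp_top hp
  rw [eLpNorm_eq_lintegral_rpow_enorm_toReal (by positivity) hp_top]
  gcongr with x
  exact ENNReal.rpow_le_self_of_le_one (hf x) hp1

lemma integral_exp_neg_sq_div (c w : ℝ) :
    ∫ y, exp (-((y + c) / w)^2 / 2) = |w| * √(2 * π) := by
  rw [integral_add_right_eq_self (fun y => exp (-(y / w)^2 / 2)),
    Measure.integral_comp_div (fun y => exp (-y^2 / 2)), smul_eq_mul]
  congr 1
  calc ∫ y, exp (-y^2 / 2) = ∫ y, exp (-(1/2) * y^2) := by congr 1; ext y; ring_nf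
    _ = √(2 * π) := by rw [integral_gaussian]; ring_nf

lemma eLpNorm_exp_neg_sq_div_le {p : ENNReal} (hp : 1 ≤ p) (c : ℝ) {w : ℝ} (hw : 1 ≤ w) :
    eLpNorm (fun y => exp (-((y + c) / w)^2 / 2)) p volume ≤
      ENNReal.ofReal (√(2 * π) * w ^ (1 / p.toReal)) := by
  have hint : Integrable (fun y => exp (-((y + c) / w)^2 / 2)) := by
    convert ((integrable_exp_neg_mul_sq (b := 1/2) (by norm_num)).comp_div
      (by linarith : w ≠ 0)).comp_add_right c using 3 with y
    ring
  have h1 : (1 : ℝ) ≤ √(2 * π) := by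
    rw [Real.one_le_sqrt]; linarith [pi_gt_three]
  refine (eLpNorm_le_lintegral_rpow_of_enorm_le_one (fun y => ?_) hp).trans ?_
  · rw [Real.enorm_of_nonneg (exp_nonneg _)]
    simp only [ENNReal.ofReal_le_one, exp_le_one_iff]
    linarith [sq_nonneg ((y + c) / w)]
  simp_rw [Real.enorm_of_nonneg (exp_nonneg _)]
  rw [← ofReal_integral_eq_lintegral_ofReal hint
      (Filter.Eventually.of_forall fun _ => exp_nonneg _),
    integral_exp_neg_sq_div, abs_of_pos (by linarith),
    ENNReal.ofReal_rpow_of_nonneg (by positivity) (by positivity)]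
  gcongr
  rw [mul_rpow (by linarith) (by positivity), mul_comm]
  gcongr
  exact rpow_le_self_of_one_le h1 (one_div_toReal_le_one hp)

lemma poly_le_exp_half_sq (b z : ℝ) :
    2 * |b| * |z| + 1 + 2 * z^2 ≤ (2 * |b| + 5) * exp (z^2 / 2) := by
  have hexp := add_one_le_exp (z^2 / 2)
  have habs : |z| ≤ exp (z^2 / 2) := by nlinarith [sq_abs z, sq_nonneg (|z| - 1)]
  nlinarith [abs_nonneg b]

lemma rpow_div_sq_le_rpow {t w r : ℝ} (ht : 0 < t) (htw : √t ≤ w) (hr : r ≤ 2) :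
    w ^ r / w ^ 2 ≤ t ^ ((r - 2) / 2) := by
  have hw : 0 < w := (sqrt_pos.mpr ht).trans_le htw
  calc w ^ r / w ^ 2 = w ^ (r - 2) := by rw [rpow_sub hw, rpow_two]
    _ ≤ √t ^ (r - 2) := rpow_le_rpow_of_nonpos (sqrt_pos.mpr ht) htw (by linarith)
    _ = t ^ ((r - 2) / 2) := by rw [sqrt_eq_rpow, ← rpow_mul ht.le]; ring_nf

namespace DiffusionWaveKernel

noncomputable def gauss (z : ℝ) : ℝ := π ^ (-(1:ℝ)/2) * exp (-z^2)

noncomputable def errfn (z : ℝ) : ℝ := ∫ w in Set.Iic z, gauss w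

noncomputable def width (t : ℝ) : ℝ := √(4 * (t + 1))

noncomputable def kernel (a y t : ℝ) : ℝ :=
  errfn ((y + a*t) / width t) - errfn ((y - a*t) / width t)

noncomputable def wave (b y t : ℝ) : ℝ := gauss ((y + b*t) / width t) / width t

/-- `∂ₜ (wave b y t)`, written in terms of `z = (y + b t) / w` and `w = width t`;
the formula uses `∂ₜ w = 2 / w` and `gauss' z = -2 z gauss z`. -/
noncomputable def waveTimeDeriv (b z w : ℝ) : ℝ := gauss z / w^2 * (-2*b*z - 2*(1 - 2*z^2)/w)

lemma integrable_gauss : Integrable gauss := by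
  show Integrable (fun z : ℝ => π ^ (-(1:ℝ)/2) * exp (-z^2))
  simpa [neg_mul] using (integrable_exp_neg_mul_sq one_pos).const_mul (π ^ (-(1:ℝ)/2))

lemma continuous_gauss : Continuous gauss := by unfold gauss; fun_prop

lemma hasDerivAt_errfn (x : ℝ) : HasDerivAt errfn (gauss x) x := by
  have hsplit : errfn = fun z => (∫ w in Set.Iic 0, gauss w) + ∫ w in (0:ℝ)..z, gauss w := by
    funext z
    rw [← intervalIntegral.integral_Iic_sub_Iic integrable_gauss.integrableOn
      integrable_gauss.integrableOn, add_sub_cancel]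
    rfl
  rw [hsplit]
  exact (intervalIntegral.integral_hasDerivAt_right integrable_gauss.intervalIntegrable
    continuous_gauss.aestronglyMeasurable.stronglyMeasurableAtFilter
    continuous_gauss.continuousAt).const_add _

lemma hasDerivAt_gauss (z : ℝ) : HasDerivAt gauss (-2 * z * gauss z) z :=
  (((hasDerivAt_pow 2 z).fun_neg.exp).const_mul _).congr_deriv
    (by simp only [gauss]; push_cast; ring)

lemma width_pos {t : ℝ} (ht : -1 < t) : 0 < width t := Real.sqrt_pos.mpr (by linarith)

lemma two_le_width {t : ℝ} (ht : 0 ≤ t) : 2 ≤ width t := by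
  rw [width, show (2:ℝ) = √(2^2) by simp]
  exact Real.sqrt_le_sqrt (by linarith)

lemma sqrt_le_width {t : ℝ} (ht : 0 ≤ t) : √t ≤ width t := Real.sqrt_le_sqrt (by linarith)

lemma hasDerivAt_width {t : ℝ} (ht : -1 < t) : HasDerivAt width (2 / width t) t :=
  ((((hasDerivAt_id' t).add_const 1).const_mul 4).sqrt (by linarith)).congr_deriv
    (by rw [width]; field_simp; ring)

lemma hasDerivAt_errfn_comp (b y t : ℝ) :
    HasDerivAt (fun y' => errfn ((y' + b*t) / width t)) (wave b y t) y :=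
  ((hasDerivAt_errfn _).comp y
    (((hasDerivAt_id' y).add_const (b*t)).div_const (width t))).congr_deriv (by rw [wave]; ring)

lemma deriv_kernel (a y t : ℝ) :
    deriv (fun y' => kernel a y' t) y = wave a y t - wave (-a) y t := by
  have h := (hasDerivAt_errfn_comp a y t).fun_sub (hasDerivAt_errfn_comp (-a) y t)
  simp only [neg_mul, ← sub_eq_add_neg] at h
  exact h.deriv

lemma hasDerivAt_wave (b y : ℝ) {t : ℝ} (ht : -1 < t) :
    HasDerivAt (wave b y) (waveTimeDeriv b ((y + b*t) / width t) (width t)) t := by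
  have hw0 := (width_pos ht).ne'
  have hz := (((hasDerivAt_id' t).const_mul b).const_add y).fun_div (hasDerivAt_width ht) hw0
  refine (((hasDerivAt_gauss _).comp t hz).fun_div (hasDerivAt_width ht) hw0).congr_deriv ?_
  simp only [waveTimeDeriv, Function.comp_def]
  field_simp
  ring

lemma abs_waveTimeDeriv_le (b z : ℝ) {w : ℝ} (hw : 2 ≤ w) :
    |waveTimeDeriv b z w| ≤ π ^ (-(1:ℝ)/2) * (2 * |b| + 5) / w^2 * exp (-z^2 / 2) := by
  have hw0 : 0 < w := by linarith
  have hfactor : |-2 * b * z - 2 * (1 - 2 * z^2) / w| ≤ 2 * |b| * |z| + 1 + 2 * z^2 := by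
    have hfrac : |2 * (1 - 2 * z^2) / w| ≤ 1 + 2 * z^2 := by
      rw [abs_div, abs_of_pos hw0, div_le_iff₀ hw0, abs_le]
      constructor <;> nlinarith [sq_nonneg z]
    calc |-2 * b * z - 2 * (1 - 2 * z^2) / w| ≤ |-2 * b * z| + |2 * (1 - 2 * z^2) / w| :=
          abs_sub _ _
      _ ≤ 2 * |b| * |z| + (1 + 2 * z^2) := by
          gcongr
          simp [abs_mul]
      _ = _ := by ring
  have hexp : exp (-z^2) * exp (z^2 / 2) = exp (-z^2 / 2) := by rw [← exp_add]; ring_nf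
  calc |waveTimeDeriv b z w|
      = π ^ (-(1:ℝ)/2) / w^2 * exp (-z^2) * |-2 * b * z - 2 * (1 - 2 * z^2) / w| := by
        rw [waveTimeDeriv, gauss, abs_mul, abs_of_nonneg (by positivity)]; ring
    _ ≤ π ^ (-(1:ℝ)/2) / w^2 * exp (-z^2) * ((2 * |b| + 5) * exp (z^2 / 2)) := by
        gcongr; exact hfactor.trans (poly_le_exp_half_sq b z)
    _ = π ^ (-(1:ℝ)/2) * (2 * |b| + 5) / w^2 * exp (-z^2 / 2) := by
        rw [← hexp]; ring

lemma deriv_deriv_kernel (a y : ℝ) {t : ℝ} (ht : -1 < t) :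
    deriv (fun t' => deriv (fun y' => kernel a y' t') y) t =
      waveTimeDeriv a ((y + a*t) / width t) (width t)
        - waveTimeDeriv (-a) ((y + -a*t) / width t) (width t) := by
  simp only [deriv_kernel]
  exact ((hasDerivAt_wave a y ht).fun_sub (hasDerivAt_wave (-a) y ht)).deriv

lemma abs_deriv_deriv_kernel_le (a y : ℝ) {t : ℝ} (ht : 0 ≤ t) :
    |deriv (fun t' => deriv (fun y' => kernel a y' t') y) t| ≤
      π ^ (-(1:ℝ)/2) * (2 * |a| + 5) / width t ^ 2 *
        (exp (-((y + a*t) / width t)^2 / 2) + exp (-((y + -a*t) / width t)^2 / 2)) := by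
  rw [deriv_deriv_kernel a y (by linarith), mul_add]
  have hplus := abs_waveTimeDeriv_le a ((y + a*t) / width t) (two_le_width ht)
  have hminus := abs_waveTimeDeriv_le (-a) ((y + -a*t) / width t) (two_le_width ht)
  rw [abs_neg] at hminus
  exact (abs_sub _ _).trans (add_le_add hplus hminus)

lemma eLpNorm_deriv_deriv_kernel_le (a : ℝ) {p : ENNReal} (hp : 1 ≤ p) {t : ℝ}
    (ht : 0 ≤ t) :
    eLpNorm (fun y => deriv (fun t' => deriv (fun y' => kernel a y' t') y) t) p volume ≤
      ENNReal.ofReal (2 * √(2 * π) * (π ^ (-(1:ℝ)/2) * (2 * |a| + 5)) *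
        (width t ^ (1 / p.toReal) / width t ^ 2)) := by
  have hw := two_le_width ht
  set K := π ^ (-(1:ℝ)/2) * (2 * |a| + 5) / width t ^ 2
  have hK : 0 ≤ K := by positivity
  have hgauss (b : ℝ) := eLpNorm_exp_neg_sq_div_le hp (b * t) (w := width t) (by linarith)
  have hcont (b : ℝ) : Continuous fun y => exp (-((y + b * t) / width t)^2 / 2) := by fun_prop
  calc eLpNorm (fun y => deriv (fun t' => deriv (fun y' => kernel a y' t') y) t) p volume
      ≤ eLpNorm (K • fun y => exp (-((y + a*t) / width t)^2 / 2)
          + exp (-((y + -a*t) / width t)^2 / 2)) p volume :=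
        eLpNorm_mono_real fun y => abs_deriv_deriv_kernel_le a y ht
    _ ≤ ‖K‖ₑ * (ENNReal.ofReal (√(2 * π) * width t ^ (1 / p.toReal))
          + ENNReal.ofReal (√(2 * π) * width t ^ (1 / p.toReal))) := by
        rw [eLpNorm_const_smul]
        gcongr
        exact (eLpNorm_add_le (hcont a).aestronglyMeasurable (hcont (-a)).aestronglyMeasurable
          hp).trans (add_le_add (hgauss a) (hgauss (-a)))
    _ = _ := by
        rw [Real.enorm_of_nonneg hK, ← ENNReal.ofReal_add (by positivity) (by positivity),
          ← ENNReal.ofReal_mul hK]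
        congr 1
        ring

end DiffusionWaveKernel

theorem stmt_8_general (a : ℝ) (p : ENNReal) (hp : 1 ≤ p) :
    let g : ℝ → ℝ := fun z => Real.pi ^ (-(1:ℝ)/2) * Real.exp (-z^2)
    let errfn : ℝ → ℝ := fun z => ∫ w in Set.Iic z, g w
    let e : ℝ → ℝ → ℝ := fun y t =>
      errfn ((y + a*t) / Real.sqrt (4*(t+1))) - errfn ((y - a*t) / Real.sqrt (4*(t+1)))
    ∃ C > (0:ℝ), ∀ t : ℝ, 0 < t →
      MeasureTheory.eLpNorm
          (fun y => deriv (fun t' => deriv (fun y' => e y' t') y) t) p MeasureTheory.volume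
        ≤ ENNReal.ofReal (C * t ^ (-(1/2 : ℝ) * (1 - 1/p.toReal) - 1/2)) := by
  intro g errfn e
  refine ⟨2 * √(2 * π) * (π ^ (-(1:ℝ)/2) * (2 * |a| + 5)), by positivity, fun t ht => ?_⟩
  refine (DiffusionWaveKernel.eLpNorm_deriv_deriv_kernel_le a hp ht.le).trans
    (ENNReal.ofReal_le_ofReal ?_)
  rw [show -(1/2 : ℝ) * (1 - 1/p.toReal) - 1/2 = (1/p.toReal - 2)/2 by ring]
  gcongr
  exact rpow_div_sq_le_rpow ht (DiffusionWaveKernel.sqrt_le_width ht.le)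
    (by linarith [one_div_toReal_le_one hp])

/-- Mixed-derivative bound of Corollary 2.4:
`‖∂_t ∂_y e(·,t)‖_{L^p(ℝ)} ≤ C t^{-(1/2)(1-1/p) - 1/2}` for the error-function kernel
`e(y,t)`. -/
theorem stmt_8 (a : ℝ) (ha : 0 < a) (p : ENNReal) (hp : 1 ≤ p) :
    let g : ℝ → ℝ := fun z => Real.pi ^ (-(1:ℝ)/2) * Real.exp (-z^2)
    let errfn : ℝ → ℝ := fun z => ∫ w in Set.Iic z, g w
    let e : ℝ → ℝ → ℝ := fun y t =>
      errfn ((y + a*t) / Real.sqrt (4*(t+1))) - errfn ((y - a*t) / Real.sqrt (4*(t+1)))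
    ∃ C > (0:ℝ), ∀ t : ℝ, 0 < t →
      MeasureTheory.eLpNorm
          (fun y => deriv (fun t' => deriv (fun y' => e y' t') y) t) p MeasureTheory.volume
        ≤ ENNReal.ofReal (C * t ^ (-(1/2 : ℝ) * (1 - 1/p.toReal) - 1/2)) :=
  stmt_8_general a p hp
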